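/- arXiv:1112.0970 — 3 statements merged into one kernel-verified Lean document; each statement's English description precedes it below -/
import Mathlib

section
/- Let (A_n)_{n≥0}, (B_n)_{n≥0}, (C_n)_{n≥1} be real sequences with A_n ≠ 0 for all n, set C_0 := 0, and define polynomials by p_{-1} = 0, p_0 = 1 and p_{n+1}(x) = (A_n x + B_n) p_n(x) − C_n p_{n-1}(x) for n ≥ 0. Let ν be a finite Borel measure on ℝ all of whose absolute moments ∫|x|^k dν are finite, let λ_1,…,λ_m be nonzero reals, and for n = (n_1,…,n_m) ∈ ℕ^m set I(n) = ∫_ℝ ∏_{j=1}^m p_{n_j}(λ_j x) dν(x) (with p index −1 interpreted as the zero polynomial). Then for all n ∈ ℕ^m and all j ≠ k in {1,…,m}: (1/(A_{n_j}λ_j)) I_j^+(n) − (1/(A_{n_k}λ_k)) I_k^+(n) = (B_{n_j}/(A_{n_j}λ_j) − B_{n_k}/(A_{n_k}λ_k)) I(n) − (C_{n_j}/(A_{n_j}λ_j)) I_j^-(n) + (C_{n_k}/(A_{n_k}λ_k)) I_k^-(n), where the terms with C_{n_j} or C_{n_k} vanish when n_j = 0 resp. n_k = 0 (since C_0 = 0).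 -/
/-!
Each `p_n` is the evaluation of a polynomial determined by the recurrence, so every integrand is
a polynomial and is integrable by the moment hypothesis. Splitting off the `j`-th factor of the
integrand and applying the recurrence to `p_{n_j + 1}(λ_j x)` gives
`(A_{n_j} λ_j)⁻¹ I_j^+(n) = ∫ x ∏ᵢ p_{n_i}(λ_i x) dν + B_{n_j}/(A_{n_j} λ_j) I(n) - C_{n_j}/(A_{n_j} λ_j) I_j^-(n)`.
The first term on the right does not depend on `j`, so it cancels in the difference of these
identities for `j` and `k`.
-/

open Finset MeasureTheory

namespace Paper

open Polynomial

noncomputable def threeTermPoly {R : Type*} [CommRing R] (a b c : ℕ → R) : ℕ → R[X]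
  | 0 => 1
  | 1 => C (a 0) * X + C (b 0)
  | n + 2 => (C (a (n + 1)) * X + C (b (n + 1))) * threeTermPoly a b c (n + 1)
      - C (c (n + 1)) * threeTermPoly a b c n

section ThreeTermPoly

variable {R : Type*} [CommRing R] {a b c : ℕ → R}

/-- With `c 0 = 0`, the truncated index `0 - 1 = 0` plays the role of `p_{-1} = 0`. -/
theorem threeTermPoly_succ (hc0 : c 0 = 0) (n : ℕ) :
    threeTermPoly a b c (n + 1) =
      (C (a n) * X + C (b n)) * threeTermPoly a b c n - C (c n) * threeTermPoly a b c (n - 1) := by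
  cases n with
  | zero => simp [threeTermPoly, hc0]
  | succ n => rfl

theorem eq_eval_threeTermPoly {p : ℕ → R → R} (hp0 : ∀ x, p 0 x = 1)
    (hp1 : ∀ x, p 1 x = a 0 * x + b 0)
    (hprec : ∀ n x, p (n + 2) x = (a (n + 1) * x + b (n + 1)) * p (n + 1) x - c (n + 1) * p n x)
    (n : ℕ) (x : R) : p n x = (threeTermPoly a b c n).eval x := by
  induction n using Nat.twoStepInduction with
  | zero => simp [threeTermPoly, hp0]
  | one => simp [threeTermPoly, hp1]
  | more n ih₀ ih₁ => simp [threeTermPoly, hprec, ih₀, ih₁]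

end ThreeTermPoly

theorem integrable_eval_of_integrable_abs_pow {ν : Measure ℝ}
    (hmom : ∀ k : ℕ, Integrable (fun x : ℝ => |x| ^ k) ν) (q : ℝ[X]) :
    Integrable (fun x => q.eval x) ν := by
  have hpow (k : ℕ) : Integrable (fun x : ℝ => x ^ k) ν :=
    (hmom k).mono' (continuous_pow k).aestronglyMeasurable (ae_of_all _ fun x => by simp)
  simp_rw [eval_eq_sum_range]
  exact integrable_finsetSum _ fun k _ => (hpow k).const_mul _

noncomputable def prodEvalScaled {ι : Type*} [Fintype ι] (q : ℕ → ℝ[X]) (lam : ι → ℝ)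
    (n : ι → ℕ) (x : ℝ) : ℝ :=
  ∏ i, (q (n i)).eval (lam i * x)

section ProdEvalScaled

variable {ι : Type*} [Fintype ι] (q : ℕ → ℝ[X]) (lam : ι → ℝ) (n : ι → ℕ)

theorem integrable_eval_mul_prodEvalScaled {ν : Measure ℝ}
    (hmom : ∀ k : ℕ, Integrable (fun x : ℝ => |x| ^ k) ν) (r : ℝ[X]) :
    Integrable (fun x => r.eval x * prodEvalScaled q lam n x) ν := by
  have h := integrable_eval_of_integrable_abs_pow hmom (r * ∏ i, (q (n i)).comp (C (lam i) * X))
  simp only [eval_mul, eval_prod, eval_comp] at h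
  simp only [eval_C, eval_X] at h
  exact h

variable [DecidableEq ι]

theorem prodEvalScaled_update (j : ι) (v : ℕ) (x : ℝ) :
    prodEvalScaled q lam (Function.update n j v) x =
      (q v).eval (lam j * x) * ∏ i ∈ univ.erase j, (q (n i)).eval (lam i * x) := by
  rw [prodEvalScaled, ← mul_prod_erase _ _ (mem_univ j), Function.update_self]
  congr 1
  exact prod_congr rfl fun i hi => by rw [Function.update_of_ne (ne_of_mem_erase hi)]

variable {a b c : ℕ → ℝ} {j : ι}

theorem prodEvalScaled_update_succ (hc0 : c 0 = 0) (ha : a (n j) * lam j ≠ 0) (x : ℝ) :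
    1 / (a (n j) * lam j) * prodEvalScaled (threeTermPoly a b c) lam
        (Function.update n j (n j + 1)) x =
      x * prodEvalScaled (threeTermPoly a b c) lam n x
        + b (n j) / (a (n j) * lam j) * prodEvalScaled (threeTermPoly a b c) lam n x
        - c (n j) / (a (n j) * lam j) * prodEvalScaled (threeTermPoly a b c) lam
            (Function.update n j (n j - 1)) x := by
  have hn : prodEvalScaled (threeTermPoly a b c) lam n x =
      prodEvalScaled (threeTermPoly a b c) lam (Function.update n j (n j)) x := by
    rw [Function.update_eq_self]
  rw [hn, prodEvalScaled_update, prodEvalScaled_update, prodEvalScaled_update,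
    threeTermPoly_succ hc0]
  simp only [eval_sub, eval_mul, eval_add, eval_C, eval_X]
  have := left_ne_zero_of_mul ha
  have := right_ne_zero_of_mul ha
  field_simp

theorem integral_prodEvalScaled_update_succ (hc0 : c 0 = 0) (ha : a (n j) * lam j ≠ 0)
    {ν : Measure ℝ} (hmom : ∀ k : ℕ, Integrable (fun x : ℝ => |x| ^ k) ν) :
    1 / (a (n j) * lam j) * ∫ x, prodEvalScaled (threeTermPoly a b c) lam
        (Function.update n j (n j + 1)) x ∂ν =
      ∫ x, x * prodEvalScaled (threeTermPoly a b c) lam n x ∂ν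
        + b (n j) / (a (n j) * lam j) * ∫ x, prodEvalScaled (threeTermPoly a b c) lam n x ∂ν
        - c (n j) / (a (n j) * lam j) * ∫ x, prodEvalScaled (threeTermPoly a b c) lam
            (Function.update n j (n j - 1)) x ∂ν := by
  have hint (n' : ι → ℕ) : Integrable (prodEvalScaled (threeTermPoly a b c) lam n') ν := by
    simpa using integrable_eval_mul_prodEvalScaled (threeTermPoly a b c) lam n' hmom 1
  have hint_X : Integrable (fun x => x * prodEvalScaled (threeTermPoly a b c) lam n x) ν := by
    simpa using integrable_eval_mul_prodEvalScaled (threeTermPoly a b c) lam n hmom X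
  have hint_sum : Integrable (fun x => x * prodEvalScaled (threeTermPoly a b c) lam n x
      + b (n j) / (a (n j) * lam j) * prodEvalScaled (threeTermPoly a b c) lam n x) ν :=
    hint_X.add ((hint n).const_mul _)
  rw [← integral_const_mul, ← integral_const_mul, ← integral_const_mul,
    ← integral_add hint_X ((hint n).const_mul _), ← integral_sub hint_sum ((hint _).const_mul _)]
  exact integral_congr_ae (ae_of_all _ (prodEvalScaled_update_succ lam n hc0 ha))

end ProdEvalScaled

theorem difference_system_for_linearization_integrals_general
    (A B C : ℕ → ℝ) (hA : ∀ n, A n ≠ 0) (hC0 : C 0 = 0)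
    (p : ℕ → ℝ → ℝ)
    (hp0 : ∀ x, p 0 x = 1)
    (hp1 : ∀ x, p 1 x = A 0 * x + B 0)
    (hprec : ∀ (n : ℕ) (x : ℝ),
      p (n + 2) x = (A (n + 1) * x + B (n + 1)) * p (n + 1) x - C (n + 1) * p n x)
    (ν : Measure ℝ)
    (hmom : ∀ k : ℕ, Integrable (fun x : ℝ => |x| ^ k) ν)
    (m : ℕ) (lam : Fin m → ℝ) (hlam : ∀ j, lam j ≠ 0)
    (I : (Fin m → ℕ) → ℝ)
    (hI : ∀ n : Fin m → ℕ, I n = ∫ x, ∏ j : Fin m, p (n j) (lam j * x) ∂ν) :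
    ∀ (n : Fin m → ℕ) (j k : Fin m), j ≠ k →
      (1 / (A (n j) * lam j)) * I (Function.update n j (n j + 1))
          - (1 / (A (n k) * lam k)) * I (Function.update n k (n k + 1))
        = (B (n j) / (A (n j) * lam j) - B (n k) / (A (n k) * lam k)) * I n
            - (C (n j) / (A (n j) * lam j)) * I (Function.update n j (n j - 1))
            + (C (n k) / (A (n k) * lam k)) * I (Function.update n k (n k - 1)) := by
  obtain rfl : p = fun n x => (threeTermPoly A B C n).eval x :=
    funext₂ (eq_eval_threeTermPoly hp0 hp1 hprec)
  intro n j k _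
  have hI' (n' : Fin m → ℕ) : I n' = ∫ x, prodEvalScaled (threeTermPoly A B C) lam n' x ∂ν :=
    hI n'
  have key (i : Fin m) := integral_prodEvalScaled_update_succ lam n (b := B) hC0
    (mul_ne_zero (hA (n i)) (hlam i)) hmom
  simp only [hI']
  linear_combination key j - key k

/-- the basic difference system satisfied by the integrals
`I(n) = ∫ ∏_j p_{n_j}(λ_j x) dν(x)`, where the `p_n` are defined by
`p_0 = 1`, `p_1(x) = A_0 x + B_0`, `p_{n+1} = (A_n x + B_n) p_n - C_n p_{n-1}`,
with `C_0 = 0` (so the terms with `C_{n_j}` vanish when `n_j = 0`). -/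
theorem difference_system_for_linearization_integrals
    (A B C : ℕ → ℝ) (hA : ∀ n, A n ≠ 0) (hC0 : C 0 = 0)
    (p : ℕ → ℝ → ℝ)
    (hp0 : ∀ x, p 0 x = 1)
    (hp1 : ∀ x, p 1 x = A 0 * x + B 0)
    (hprec : ∀ (n : ℕ) (x : ℝ),
      p (n + 2) x = (A (n + 1) * x + B (n + 1)) * p (n + 1) x - C (n + 1) * p n x)
    (ν : Measure ℝ) [IsFiniteMeasure ν]
    (hmom : ∀ k : ℕ, Integrable (fun x : ℝ => |x| ^ k) ν)
    (m : ℕ) (lam : Fin m → ℝ) (hlam : ∀ j, lam j ≠ 0)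
    (I : (Fin m → ℕ) → ℝ)
    (hI : ∀ n : Fin m → ℕ, I n = ∫ x, ∏ j : Fin m, p (n j) (lam j * x) ∂ν) :
    ∀ (n : Fin m → ℕ) (j k : Fin m), j ≠ k →
      (1 / (A (n j) * lam j)) * I (Function.update n j (n j + 1))
          - (1 / (A (n k) * lam k)) * I (Function.update n k (n k + 1))
        = (B (n j) / (A (n j) * lam j) - B (n k) / (A (n k) * lam k)) * I n
            - (C (n j) / (A (n j) * lam j)) * I (Function.update n j (n j - 1))
            + (C (n k) / (A (n k) * lam k)) * I (Function.update n k (n k - 1)) :=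
  difference_system_for_linearization_integrals_general A B C hA hC0 p hp0 hp1 hprec ν hmom m lam
    hlam I hI

end Paper
end

section
/- Let (A_n)_{n≥0}, (B_n)_{n≥0}, (C_n)_{n≥1} be real sequences with A_n ≠ 0 for all n, set C_0 := 0, and let λ_1,…,λ_m be nonzero reals with λ_m = 1; put u_{jk}(n) = (A_{n_j} λ_j)/(A_{n_k} λ_k). Suppose y, y' : ℕ^m → ℝ both satisfy: (i) for all n ∈ ℕ^m and all j ≠ k in {1,…,m}, y_j^+(n) − u_{jk}(n) y_k^+(n) = (B_{n_j} − u_{jk}(n) B_{n_k}) y(n) − C_{n_j} y_j^-(n) + u_{jk}(n) C_{n_k} y_k^-(n) (the terms with C_{n_j} resp. C_{n_k} being omitted when n_j = 0 resp. n_k = 0); (ii) y(0,…,0) = 1; (iii) y(n) = 0 whenever n_1 + ⋯ + n_{m-1} < n_m; (iv) for every j with 1 ≤ j ≤ m−1, the value of y at the tuple with 1 in position j, n in position m, and 0 elsewhere equals λ_j C_1 A_0/A_1 if n = 1 and B_0(1 − λ_j) if n = 0. Then y = y', i.e. the system together with these boundary conditions admits at most one solution. -/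
/-! The difference system is a recursion: with `k` the last index, the equation centred at `p`
expresses `y (p + e_j)` through the values at `p`, `p + e_k`, `p - e_j` and `p - e_k`. Counting
the last coordinate once and the others twice, all four points are lighter than `p + e_j`, so
induction on this weight reduces uniqueness to the last axis, where `y` is `1` at the origin and
vanishes elsewhere by condition (iii). -/

open Finset

namespace Paper

/-- `y` solves the difference system \eqref{eqIplusminusy} together with the
boundary conditions \eqref{eqsys}.  Here there are `m + 1` boxes, indexed by
`Fin (m+1)`, the last one playing the role of the index `m` of the paper;
`u_{jk}(n) = (A_{n_j} λ_j)/(A_{n_k} λ_k)`, and `C 0 = 0` is assumed, so the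
terms with `C_{n_j}` vanish automatically when `n_j = 0`. -/
def IsSolution (m : ℕ) (A B C : ℕ → ℝ) (lam : Fin (m + 1) → ℝ)
    (y : (Fin (m + 1) → ℕ) → ℝ) : Prop :=
  -- the difference system
  (∀ (n : Fin (m + 1) → ℕ) (j k : Fin (m + 1)), j ≠ k →
    y (Function.update n j (n j + 1))
        - (A (n j) * lam j) / (A (n k) * lam k) * y (Function.update n k (n k + 1))
      = (B (n j) - (A (n j) * lam j) / (A (n k) * lam k) * B (n k)) * y n
          - C (n j) * y (Function.update n j (n j - 1))
          + (A (n j) * lam j) / (A (n k) * lam k) * C (n k)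
              * y (Function.update n k (n k - 1))) ∧
  -- y(0,…,0) = 1
  y (fun _ => 0) = 1 ∧
  -- y(n) = 0 whenever n_1 + ⋯ + n_{m-1} < n_m
  (∀ n : Fin (m + 1) → ℕ,
    (∑ j ∈ (Finset.univ : Finset (Fin (m + 1))).erase (Fin.last m), n j) < n (Fin.last m) →
      y n = 0) ∧
  -- boundary values of y at (0,…,1_{(j)},…,0,n) for n = 0, 1
  (∀ j : Fin (m + 1), j ≠ Fin.last m →
    y (Function.update (fun _ => 0) j 1) = B 0 * (1 - lam j) ∧
    y (Function.update (Function.update (fun _ => 0) (Fin.last m) 1) j 1)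
      = lam j * C 1 * A 0 / A 1)

section WeightedInduction

variable {ι : Type*} [DecidableEq ι]

def weightCoeff (l i : ι) : ℕ := if i = l then 1 else 2

theorem weightCoeff_of_ne {l j : ι} (hj : j ≠ l) : weightCoeff l j = 2 := if_neg hj

theorem weightCoeff_self (l : ι) : weightCoeff l l = 1 := if_pos rfl

variable [Fintype ι]

def weight (l : ι) (n : ι → ℕ) : ℕ := ∑ i, weightCoeff l i * n i

theorem weight_update (l : ι) (n : ι → ℕ) (i : ι) (v : ℕ) :
    weight l (Function.update n i v) + weightCoeff l i * n i
      = weight l n + weightCoeff l i * v := by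
  have hupdate : (fun x => weightCoeff l x * Function.update n i v x)
      = Function.update (fun x => weightCoeff l x * n x) i (weightCoeff l i * v) := by
    funext x
    by_cases h : x = i <;> simp [h]
  rw [weight, weight, hupdate, sum_update_of_mem (mem_univ i), sdiff_singleton_eq_erase,
    ← add_sum_erase _ (fun x => weightCoeff l x * n x) (mem_univ i)]
  ring

theorem forall_of_axis_of_step (l : ι) {P : (ι → ℕ) → Prop}
    (axis : ∀ n, (∀ j ≠ l, n j = 0) → P n)
    (step : ∀ p j, j ≠ l → P p → P (Function.update p l (p l + 1)) →
      P (Function.update p j (p j - 1)) → P (Function.update p l (p l - 1)) →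
      P (Function.update p j (p j + 1)))
    (n : ι → ℕ) : P n := by
  induction hw : weight l n using Nat.strong_induction_on generalizing n with
  | _ w ih =>
  by_cases hoff : ∃ j ≠ l, 1 ≤ n j
  · obtain ⟨j, hj, hnj⟩ := hoff
    have hlower := weight_update l n j (n j - 1)
    rw [weightCoeff_of_ne hj] at hlower
    set p := Function.update n j (n j - 1)
    have hp : Function.update p j (p j + 1) = n := by
      simp only [p, Function.update_idem, Function.update_self, Nat.sub_add_cancel hnj,
        Function.update_eq_self]
    -- `weight n = weight p + 2`, while `p`, `p ± e_l` and `p - e_j` weigh at most `weight p + 1`.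
    have below : ∀ i v, weightCoeff l i * v ≤ weightCoeff l i * p i + 1 →
        P (Function.update p i v) := fun i v hv => by
      have := weight_update l p i v
      exact ih _ (by omega) _ rfl
    rw [← hp]
    refine step p j hj ?_ (below _ _ ?_) (below _ _ ?_) (below _ _ ?_)
    · simpa only [Function.update_eq_self] using below j (p j) (by omega)
    · rw [weightCoeff_self]; omega
    · rw [weightCoeff_of_ne hj]; omega
    · rw [weightCoeff_self]; omega
  · push Not at hoff
    exact axis n fun j hj => by have := hoff j hj; omega

end WeightedInduction

theorem IsSolution.eq_on_last_axis {m : ℕ} {A B C : ℕ → ℝ} {lam : Fin (m + 1) → ℝ}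
    {y y' : (Fin (m + 1) → ℕ) → ℝ} (hy : IsSolution m A B C lam y)
    (hy' : IsSolution m A B C lam y') (n : Fin (m + 1) → ℕ)
    (hn : ∀ j ≠ Fin.last m, n j = 0) : y n = y' n := by
  have hrest : ∑ j ∈ univ.erase (Fin.last m), n j = 0 :=
    sum_eq_zero fun j hj => hn j (ne_of_mem_erase hj)
  rcases Nat.eq_zero_or_pos (n (Fin.last m)) with hlast | hlast
  · have hzero : n = fun _ => 0 := by
      funext j
      by_cases h : j = Fin.last m
      · rw [h, hlast]
      · exact hn j h
    rw [hzero, hy.2.1, hy'.2.1]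
  · rw [← hrest] at hlast
    rw [hy.2.2.1 n hlast, hy'.2.2.1 n hlast]

theorem IsSolution.eq_step {m : ℕ} {A B C : ℕ → ℝ} {lam : Fin (m + 1) → ℝ}
    {y y' : (Fin (m + 1) → ℕ) → ℝ} (hy : IsSolution m A B C lam y)
    (hy' : IsSolution m A B C lam y') (p : Fin (m + 1) → ℕ) {j k : Fin (m + 1)} (hjk : j ≠ k)
    (h_self : y p = y' p)
    (hk_succ : y (Function.update p k (p k + 1)) = y' (Function.update p k (p k + 1)))
    (hj_pred : y (Function.update p j (p j - 1)) = y' (Function.update p j (p j - 1)))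
    (hk_pred : y (Function.update p k (p k - 1)) = y' (Function.update p k (p k - 1))) :
    y (Function.update p j (p j + 1)) = y' (Function.update p j (p j + 1)) := by
  have E := hy.1 p j k hjk
  have E' := hy'.1 p j k hjk
  rw [h_self, hk_succ, hj_pred, hk_pred] at E
  linarith

theorem uniqueness_of_solution_general (m : ℕ) (A B C : ℕ → ℝ)
    (lam : Fin (m + 1) → ℝ)
    (y y' : (Fin (m + 1) → ℕ) → ℝ)
    (hy : IsSolution m A B C lam y) (hy' : IsSolution m A B C lam y') :
    y = y' :=
  funext <| forall_of_axis_of_step (Fin.last m) (hy.eq_on_last_axis hy')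
    fun p _ hj => hy.eq_step hy' p hj

/-- the difference system together with the boundary conditions has
at most one solution. -/
theorem uniqueness_of_solution (m : ℕ) (A B C : ℕ → ℝ) (hA : ∀ n, A n ≠ 0)
    (hC0 : C 0 = 0) (lam : Fin (m + 1) → ℝ) (hlam : ∀ j, lam j ≠ 0)
    (hlamlast : lam (Fin.last m) = 1)
    (y y' : (Fin (m + 1) → ℕ) → ℝ)
    (hy : IsSolution m A B C lam y) (hy' : IsSolution m A B C lam y') :
    y = y' :=
  uniqueness_of_solution_general m A B C lam y y' hy hy'

end Paper
end

section
/- Let n = (n_1,…,n_m) be a tuple of nonnegative integers with N = n_1+⋯+n_m and let K(n) be the number of inhomogeneous perfect matchings of [N] with respect to the boxes determined by n. Then for all j ≠ k in {1,…,m}: K_j^+(n) − K_k^+(n) = n_k K_k^-(n) − n_j K_j^-(n), where a term n_j K_j^-(n) is interpreted as 0 when n_j = 0. -/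
open Finset MeasureTheory
open scoped Classical

namespace Paper

def psum {m : ℕ} (n : Fin m → ℕ) (j : Fin m) : ℕ :=
  ∑ t : Fin m, if t < j then n t else 0

def inBox {m : ℕ} (n : Fin m → ℕ) (j : Fin m) (i : ℕ) : Prop :=
  psum n j ≤ i ∧ i < psum n j + n j

def sameBox {m : ℕ} (n : Fin m → ℕ) (i k : ℕ) : Prop :=
  ∃ j : Fin m, inBox n j i ∧ inBox n j k

def total {m : ℕ} (n : Fin m → ℕ) : ℕ := ∑ t, n t

/-- `P` is a set partition of `{0, …, N-1}`. -/
def IsPartitionOf (N : ℕ) (P : Finset (Finset ℕ)) : Prop :=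
  (∀ b ∈ P, b ⊆ Finset.range N ∧ b.Nonempty) ∧
  ∀ i ∈ Finset.range N, (P.filter fun b => i ∈ b).card = 1

/-- No block of `P` contains two distinct elements of the same box. -/
def InhomBlocks {m : ℕ} (n : Fin m → ℕ) (P : Finset (Finset ℕ)) : Prop :=
  ∀ b ∈ P, ∀ i ∈ b, ∀ k ∈ b, i ≠ k → ¬ sameBox n i k

/-- The inhomogeneous perfect matchings of `[N]` w.r.t. the boxes of `n`. -/
noncomputable def matchings {m : ℕ} (n : Fin m → ℕ) : Finset (Finset (Finset ℕ)) :=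
  ((Finset.range (total n)).powerset.powerset).filter
    (fun P => IsPartitionOf (total n) P ∧ (∀ b ∈ P, b.card = 2) ∧ InhomBlocks n P)

/-- Number of inhomogeneous perfect matchings. -/
noncomputable def K {m : ℕ} (n : Fin m → ℕ) : ℕ := (matchings n).card

section boxes
variable {m : ℕ} (n : Fin m → ℕ)

lemma psum_eq (j : Fin m) : psum n j = ∑ t ∈ univ.filter (· < j), n t := by
  rw [psum, Finset.sum_filter]

lemma psum_add_le {s t : Fin m} (h : s < t) : psum n s + n s ≤ psum n t := by
  rw [psum_eq, psum_eq]
  have hs : s ∉ univ.filter (· < s) := by simp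
  have hins : insert s (univ.filter (· < s)) ⊆ univ.filter (· < t) := by
    intro x hx
    simp only [mem_insert, mem_filter, mem_univ, true_and] at hx ⊢
    rcases hx with rfl | hx
    · exact h
    · exact hx.trans h
  calc ∑ x ∈ univ.filter (· < s), n x + n s
      = ∑ x ∈ insert s (univ.filter (· < s)), n x := by
        rw [Finset.sum_insert hs, add_comm]
    _ ≤ ∑ x ∈ univ.filter (· < t), n x := Finset.sum_le_sum_of_subset hins

lemma psum_add_le_total (s : Fin m) : psum n s + n s ≤ total n := by
  rw [psum_eq, total]
  have hs : s ∉ univ.filter (· < s) := by simp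
  calc ∑ x ∈ univ.filter (· < s), n x + n s
      = ∑ x ∈ insert s (univ.filter (· < s)), n x := by
        rw [Finset.sum_insert hs, add_comm]
    _ ≤ ∑ x, n x := Finset.sum_le_sum_of_subset (subset_univ _)

lemma psum_add_le_psum_add {s t : Fin m} (h : s ≤ t) :
    psum n s + n s ≤ psum n t + n t := by
  rcases eq_or_lt_of_le h with rfl | h
  · exact le_rfl
  · exact (psum_add_le n h).trans (Nat.le_add_right _ _)

private def q (s : ℕ) : ℕ := ∑ t : Fin m, if (t : ℕ) < s then n t else 0

private lemma q_zero : q n 0 = 0 := by simp [q]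

private lemma q_m : q n m = total n := by
  unfold q total
  exact Finset.sum_congr rfl fun t _ => by simp [t.isLt]

private lemma q_fin (s : Fin m) : q n (s : ℕ) = psum n s := by
  unfold q psum
  exact Finset.sum_congr rfl fun t _ => by simp only [Fin.lt_def]

private lemma q_fin_succ (s : Fin m) : q n ((s : ℕ) + 1) = psum n s + n s := by
  unfold q
  rw [← Finset.sum_filter, psum_eq]
  have hs : s ∉ univ.filter (· < s) := by simp
  have : univ.filter (fun t : Fin m => (t : ℕ) < (s : ℕ) + 1)
      = insert s (univ.filter (· < s)) := by
    ext t
    simp only [mem_filter, mem_univ, true_and, mem_insert, Nat.lt_succ_iff, Fin.lt_def]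
    constructor
    · intro ht
      rcases eq_or_lt_of_le ht with h | h
      · exact Or.inl (Fin.ext h)
      · exact Or.inr h
    · rintro (rfl | h)
      · exact le_rfl
      · exact le_of_lt h
  rw [this, Finset.sum_insert hs, add_comm]

private lemma nat_step (f : ℕ → ℕ) (h0 : f 0 = 0) :
    ∀ M i, i < f M → ∃ s, s < M ∧ f s ≤ i ∧ i < f (s + 1) := by
  intro M
  induction M with
  | zero => intro i hi; omega
  | succ M ih =>
    intro i hi
    by_cases h : f M ≤ i
    · exact ⟨M, Nat.lt_succ_self M, h, hi⟩
    · obtain ⟨s, hs, h1, h2⟩ := ih i (by omega)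
      exact ⟨s, by omega, h1, h2⟩

lemma exists_box {i : ℕ} (hi : i < total n) : ∃ s : Fin m, inBox n s i := by
  obtain ⟨s, hs, h1, h2⟩ := nat_step (q n) (q_zero n) m i (by rwa [q_m])
  refine ⟨⟨s, hs⟩, ?_, ?_⟩
  · rwa [← q_fin]
  · rw [← q_fin_succ]; exact h2

lemma box_unique {s t : Fin m} {i : ℕ} (hs : inBox n s i) (ht : inBox n t i) : s = t := by
  rcases lt_trichotomy s t with h | h | h
  · exact absurd ((hs.2.trans_le (psum_add_le n h)).trans_le ht.1) (lt_irrefl i)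
  · exact h
  · exact absurd ((ht.2.trans_le (psum_add_le n h)).trans_le hs.1) (lt_irrefl i)

/-- The (0-based) index of the box containing `i`. -/
noncomputable def colorOf (i : ℕ) : ℕ :=
  (univ.filter (fun t : Fin m => psum n t + n t ≤ i)).card

lemma colorOf_eq {s : Fin m} {i : ℕ} (hs : inBox n s i) : colorOf n i = (s : ℕ) := by
  unfold colorOf
  have : univ.filter (fun t : Fin m => psum n t + n t ≤ i) = Finset.Iio s := by
    ext t
    simp only [mem_filter, mem_univ, true_and, Finset.mem_Iio]
    constructor
    · intro ht
      by_contra h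
      push_neg at h
      exact absurd (hs.2.trans_le ((psum_add_le_psum_add n h).trans ht)) (lt_irrefl i)
    · intro ht
      exact (psum_add_le n ht).trans hs.1
  rw [this, Fin.card_Iio]

lemma inBox_iff_colorOf {s : Fin m} {i : ℕ} (hi : i < total n) :
    inBox n s i ↔ colorOf n i = (s : ℕ) := by
  constructor
  · exact colorOf_eq n
  · intro h
    obtain ⟨u, hu⟩ := exists_box n hi
    have hv := colorOf_eq n hu
    have hus : u = s := Fin.ext (by omega)
    rwa [hus] at hu

lemma sameBox_iff {i k : ℕ} (hi : i < total n) (hk : k < total n) :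
    sameBox n i k ↔ colorOf n i = colorOf n k := by
  constructor
  · rintro ⟨s, h1, h2⟩
    rw [colorOf_eq n h1, colorOf_eq n h2]
  · intro h
    obtain ⟨s, hs⟩ := exists_box n hi
    obtain ⟨u, hu⟩ := exists_box n hk
    have hv := (colorOf_eq n hs).symm.trans (h.trans (colorOf_eq n hu))
    have hsu : s = u := Fin.ext (by omega)
    exact ⟨s, hs, by rw [hsu]; exact hu⟩

end boxes
section matchcount
variable {m : ℕ}

def Pred (S : Finset ℕ) (c : ℕ → ℕ) (P : Finset (Finset ℕ)) : Prop :=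
  ((∀ b ∈ P, b ⊆ S ∧ b.Nonempty) ∧ ∀ i ∈ S, (P.filter fun b => i ∈ b).card = 1) ∧
  (∀ b ∈ P, b.card = 2) ∧
  (∀ b ∈ P, ∀ i ∈ b, ∀ k ∈ b, i ≠ k → c i ≠ c k)

noncomputable def Mset (S : Finset ℕ) (c : ℕ → ℕ) : Finset (Finset (Finset ℕ)) :=
  (S.powerset.powerset).filter (Pred S c)

lemma mem_Mset {S : Finset ℕ} {c : ℕ → ℕ} {P : Finset (Finset ℕ)} :
    P ∈ Mset S c ↔ Pred S c P := by
  unfold Mset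
  rw [mem_filter]
  constructor
  · exact And.right
  · intro h
    refine ⟨?_, h⟩
    rw [mem_powerset]
    intro b hb
    rw [mem_powerset]
    exact (h.1.1 b hb).1

lemma unique_block {S : Finset ℕ} {c : ℕ → ℕ} {P : Finset (Finset ℕ)} (hP : Pred S c P)
    {b b' : Finset ℕ} (hb : b ∈ P) (hb' : b' ∈ P) {i : ℕ} (hib : i ∈ b) (hib' : i ∈ b')
    (hiS : i ∈ S) : b = b' := by
  obtain ⟨b0, hb0⟩ := card_eq_one.mp (hP.1.2 i hiS)
  have h1 : b ∈ P.filter (fun b => i ∈ b) := mem_filter.mpr ⟨hb, hib⟩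
  have h2 : b' ∈ P.filter (fun b => i ∈ b) := mem_filter.mpr ⟨hb', hib'⟩
  rw [hb0, mem_singleton] at h1 h2
  rw [h1, h2]

lemma block_of_mem {S : Finset ℕ} {c : ℕ → ℕ} {P : Finset (Finset ℕ)} (hP : Pred S c P)
    {a : ℕ} (ha : a ∈ S) :
    ∃ x, x ∈ S ∧ x ≠ a ∧ c x ≠ c a ∧ {a, x} ∈ P ∧ ∀ b ∈ P, a ∈ b → b = {a, x} := by
  obtain ⟨b0, hb0⟩ := card_eq_one.mp (hP.1.2 a ha)
  have hb0m : b0 ∈ P.filter (fun b => a ∈ b) := by rw [hb0]; exact mem_singleton_self _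
  rw [mem_filter] at hb0m
  obtain ⟨hb0P, hab0⟩ := hb0m
  obtain ⟨u, v, huv, hb0e⟩ := Finset.card_eq_two.mp (hP.2.1 b0 hb0P)
  have huniq : ∀ b ∈ P, a ∈ b → b = b0 := by
    intro b hb hab
    have : b ∈ P.filter (fun b => a ∈ b) := mem_filter.mpr ⟨hb, hab⟩
    rw [hb0, mem_singleton] at this
    exact this
  subst hb0e
  rcases mem_insert.mp hab0 with rfl | hv
  · refine ⟨v, (hP.1.1 _ hb0P).1 (by simp), huv.symm, ?_, hb0P, huniq⟩
    exact hP.2.2 _ hb0P v (by simp) a (by simp) huv.symm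
  · rw [mem_singleton] at hv
    subst hv
    have hswap : ({u, a} : Finset ℕ) = {a, u} := Finset.pair_comm u a
    refine ⟨u, (hP.1.1 _ hb0P).1 (by simp), huv, ?_, by rwa [← hswap], ?_⟩
    · exact hP.2.2 _ hb0P u (by simp) a (by simp) huv
    · intro b hb hab
      rw [huniq b hb hab, hswap]

noncomputable def partner (P : Finset (Finset ℕ)) (a : ℕ) : ℕ :=
  if h : ∃ x, x ≠ a ∧ {a, x} ∈ P then h.choose else 0

lemma partner_eq {P : Finset (Finset ℕ)} {a x : ℕ} (hx : x ≠ a) (hmem : {a, x} ∈ P)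
    (huniq : ∀ y, y ≠ a → {a, y} ∈ P → y = x) : partner P a = x := by
  unfold partner
  have h : ∃ y, y ≠ a ∧ ({a, y} : Finset ℕ) ∈ P := ⟨x, hx, hmem⟩
  rw [dif_pos h]
  exact huniq _ h.choose_spec.1 h.choose_spec.2

lemma pair_mem_eq {a x y : ℕ} (hy : y ≠ a) (h : ({a, y} : Finset ℕ) = {a, x}) : y = x := by
  have : y ∈ ({a, x} : Finset ℕ) := by rw [← h]; simp
  rcases mem_insert.mp this with rfl | hyx
  · exact absurd rfl hy
  · exact mem_singleton.mp hyx

lemma deletion {S : Finset ℕ} {c : ℕ → ℕ} {a : ℕ} (ha : a ∈ S) :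
    (Mset S c).card
      = ∑ x ∈ S.filter (fun x => x ≠ a ∧ c x ≠ c a),
          (Mset ((S.erase a).erase x) c).card := by
  have hmaps : ∀ P ∈ Mset S c, partner P a ∈ S.filter (fun x => x ≠ a ∧ c x ≠ c a) := by
    intro P hP
    obtain ⟨x, hxS, hxa, hcx, hmem, huniq⟩ := block_of_mem (mem_Mset.mp hP) ha
    have : partner P a = x :=
      partner_eq hxa hmem (fun y hy hymem => pair_mem_eq hy (huniq _ hymem (by simp)))
    rw [this]
    exact mem_filter.mpr ⟨hxS, hxa, hcx⟩
  rw [Finset.card_eq_sum_card_fiberwise hmaps]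
  refine Finset.sum_congr rfl (fun x hx => ?_)
  rw [mem_filter] at hx
  obtain ⟨hxS, hxa, hcx⟩ := hx
  have haS' : a ∉ (S.erase a).erase x := fun h => (mem_erase.mp (mem_erase.mp h).2).1 rfl
  have hxS' : x ∉ (S.erase a).erase x := fun h => (mem_erase.mp h).1 rfl
  have hax : ({a, x} : Finset ℕ).Nonempty := ⟨a, by simp⟩
  have haax : a ∈ ({a, x} : Finset ℕ) := by simp
  have hxax : x ∈ ({a, x} : Finset ℕ) := by simp
  refine Finset.card_bij' (fun P _ => P.erase {a, x}) (fun Q _ => insert {a, x} Q) ?hi ?hj ?li ?ri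
  case hi => -- forward membership
    intro P hP
    rw [mem_filter] at hP
    obtain ⟨hPM, hpart⟩ := hP
    have hPred := mem_Mset.mp hPM
    obtain ⟨x0, hx0S, hx0a, hcx0, hmem0, huniq0⟩ := block_of_mem hPred ha
    have hx0 : x0 = x := by
      rw [← hpart]
      exact (partner_eq hx0a hmem0
        (fun y hy hymem => pair_mem_eq hy (huniq0 _ hymem (by simp)))).symm
    rw [hx0] at hmem0
    refine mem_Mset.mpr ⟨⟨?_, ?_⟩, ?_, ?_⟩
    · intro b hb
      obtain ⟨hbne, hbP⟩ := mem_erase.mp hb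
      refine ⟨?_, (hPred.1.1 b hbP).2⟩
      intro z hz
      have hzS := (hPred.1.1 b hbP).1 hz
      have hza : z ≠ a := by
        rintro rfl
        exact hbne (unique_block hPred hbP hmem0 hz haax hzS ▸ rfl)
      have hzx : z ≠ x := by
        rintro rfl
        exact hbne (unique_block hPred hbP hmem0 hz hxax hzS)
      exact mem_erase.mpr ⟨hzx, mem_erase.mpr ⟨hza, hzS⟩⟩
    · intro i hi
      obtain ⟨hix, hia, hiS⟩ : i ≠ x ∧ i ≠ a ∧ i ∈ S := by
        have h1 := mem_erase.mp hi
        have h2 := mem_erase.mp h1.2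
        exact ⟨h1.1, h2.1, h2.2⟩
      rw [Finset.filter_erase]
      rw [Finset.erase_eq_of_notMem]
      · exact hPred.1.2 i hiS
      · intro hmem
        have := (mem_filter.mp hmem).2
        rcases mem_insert.mp this with rfl | h
        · exact hia rfl
        · exact hix (mem_singleton.mp h)
    · intro b hb
      exact hPred.2.1 b (mem_erase.mp hb).2
    · intro b hb
      exact hPred.2.2 b (mem_erase.mp hb).2
  case hj => -- backward membership
    intro Q hQ
    have hQPred := mem_Mset.mp hQ
    have hblocks : ∀ b ∈ Q, b ⊆ (S.erase a).erase x := fun b hb => (hQPred.1.1 b hb).1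
    have hnotinQ : ({a, x} : Finset ℕ) ∉ Q := fun h => haS' (hblocks _ h haax)
    have hnoA : ∀ b ∈ Q, a ∉ b := fun b hb h => haS' (hblocks b hb h)
    have hnoX : ∀ b ∈ Q, x ∉ b := fun b hb h => hxS' (hblocks b hb h)
    have hPred : Pred S c (insert {a, x} Q) := by
      refine ⟨⟨?_, ?_⟩, ?_, ?_⟩
      · intro b hb
        rcases mem_insert.mp hb with rfl | hbQ
        · refine ⟨?_, hax⟩
          intro z hz
          rcases mem_insert.mp hz with rfl | h
          · exact ha
          · rw [mem_singleton.mp h]; exact hxS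
        · refine ⟨fun z hz => ?_, (hQPred.1.1 b hbQ).2⟩
          exact mem_of_mem_erase (mem_of_mem_erase (hblocks b hbQ hz))
      · intro i hiS
        rw [Finset.filter_insert]
        by_cases hia : i = a
        · subst hia
          rw [if_pos haax]
          have : Q.filter (fun b => i ∈ b) = ∅ :=
            filter_eq_empty_iff.mpr (fun b hb => hnoA b hb)
          rw [this]
          simp
        · by_cases hix : i = x
          · subst hix
            rw [if_pos hxax]
            have : Q.filter (fun b => i ∈ b) = ∅ :=
              filter_eq_empty_iff.mpr (fun b hb => hnoX b hb)
            rw [this]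
            simp
          · rw [if_neg (by simp [hia, hix])]
            exact hQPred.1.2 i (mem_erase.mpr ⟨hix, mem_erase.mpr ⟨hia, hiS⟩⟩)
      · intro b hb
        rcases mem_insert.mp hb with rfl | hbQ
        · rw [Finset.card_insert_of_notMem (by simp [Ne.symm hxa]), card_singleton]
        · exact hQPred.2.1 b hbQ
      · intro b hb i hi k hk hik
        rcases mem_insert.mp hb with rfl | hbQ
        · have hi' : i = a ∨ i = x := by
            rcases mem_insert.mp hi with h | h
            · exact Or.inl h
            · exact Or.inr (mem_singleton.mp h)
          have hk' : k = a ∨ k = x := by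
            rcases mem_insert.mp hk with h | h
            · exact Or.inl h
            · exact Or.inr (mem_singleton.mp h)
          rcases hi' with rfl | rfl <;> rcases hk' with rfl | rfl
          · exact absurd rfl hik
          · exact fun h => hcx h.symm
          · exact hcx
          · exact absurd rfl hik
        · exact hQPred.2.2 b hbQ i hi k hk hik
    refine mem_filter.mpr ⟨mem_Mset.mpr hPred, ?_⟩
    apply partner_eq hxa (mem_insert_self _ _)
    intro y hy hymem
    rcases mem_insert.mp hymem with h | hyQ
    · exact pair_mem_eq hy h
    · exact absurd (hblocks _ hyQ (by simp)) haS'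
  case li => -- left inverse
    intro P hP
    rw [mem_filter] at hP
    obtain ⟨hPM, hpart⟩ := hP
    have hPred := mem_Mset.mp hPM
    obtain ⟨x0, hx0S, hx0a, hcx0, hmem0, huniq0⟩ := block_of_mem hPred ha
    have hx0 : x0 = x := by
      rw [← hpart]
      exact (partner_eq hx0a hmem0
        (fun y hy hymem => pair_mem_eq hy (huniq0 _ hymem (by simp)))).symm
    rw [hx0] at hmem0
    exact Finset.insert_erase hmem0
  case ri => -- right inverse
    intro Q hQ
    have hQPred := mem_Mset.mp hQ
    have hnotinQ : ({a, x} : Finset ℕ) ∉ Q :=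
      fun h => haS' ((hQPred.1.1 _ h).1 haax)
    exact Finset.erase_insert hnotinQ

end matchcount

section relabel

lemma image_roundtrip {A : Finset ℕ} {f g : ℕ → ℕ} (hgf : ∀ x ∈ A, g (f x) = x)
    {b : Finset ℕ} (hbA : b ⊆ A) : (b.image f).image g = b := by
  rw [Finset.image_image]
  have : b.image (g ∘ f) = b.image id :=
    Finset.image_congr (fun x hx => hgf x (hbA hx))
  rw [this, Finset.image_id]

lemma Pred_map {A B : Finset ℕ} {c d f g : ℕ → ℕ}
    (hfB : ∀ x ∈ A, f x ∈ B) (hgA : ∀ y ∈ B, g y ∈ A)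
    (hgf : ∀ x ∈ A, g (f x) = x) (hfg : ∀ y ∈ B, f (g y) = y)
    (hcd : ∀ x ∈ A, ∀ y ∈ A, c x = c y ↔ d (f x) = d (f y))
    {P : Finset (Finset ℕ)} (hP : Pred A c P) :
    Pred B d (P.image (fun b => b.image f)) := by
  have finj : ∀ x ∈ A, ∀ y ∈ A, f x = f y → x = y := by
    intro x hx y hy h
    rw [← hgf x hx, h, hgf y hy]
  refine ⟨⟨?_, ?_⟩, ?_, ?_⟩
  · intro b' hb'
    obtain ⟨b, hb, rfl⟩ := mem_image.mp hb'
    refine ⟨?_, (hP.1.1 b hb).2.image f⟩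
    intro z hz
    obtain ⟨x, hx, rfl⟩ := mem_image.mp hz
    exact hfB x ((hP.1.1 b hb).1 hx)
  · intro i hiB
    have key : (P.image (fun b => b.image f)).filter (fun b => i ∈ b)
        = (P.filter (fun b => g i ∈ b)).image (fun b => b.image f) := by
      ext b'
      simp only [mem_filter, mem_image]
      constructor
      · rintro ⟨⟨b, hb, rfl⟩, hib'⟩
        obtain ⟨x, hx, hfx⟩ := mem_image.mp hib'
        have hxA := (hP.1.1 b hb).1 hx
        have hxg : x = g i := by rw [← hgf x hxA, hfx]
        exact ⟨b, ⟨hb, hxg ▸ hx⟩, rfl⟩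
      · rintro ⟨b, ⟨hb, hgib⟩, rfl⟩
        exact ⟨⟨b, hb, rfl⟩, mem_image.mpr ⟨g i, hgib, hfg i hiB⟩⟩
    rw [key, Finset.card_image_of_injOn, hP.1.2 (g i) (hgA i hiB)]
    intro b1 hb1 b2 hb2 he
    have hb1P := (mem_filter.mp (by exact hb1)).1
    have hb2P := (mem_filter.mp (by exact hb2)).1
    have h1 := image_roundtrip hgf (hP.1.1 b1 hb1P).1
    have h2 := image_roundtrip hgf (hP.1.1 b2 hb2P).1
    have he' : b1.image f = b2.image f := he
    rw [← h1, ← h2, he']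
  · intro b' hb'
    obtain ⟨b, hb, rfl⟩ := mem_image.mp hb'
    rw [Finset.card_image_of_injOn, hP.2.1 b hb]
    intro x hx y hy h
    exact finj x ((hP.1.1 b hb).1 hx) y ((hP.1.1 b hb).1 hy) h
  · intro b' hb' i hi k hk hik
    obtain ⟨b, hb, rfl⟩ := mem_image.mp hb'
    obtain ⟨x, hx, rfl⟩ := mem_image.mp hi
    obtain ⟨y, hy, rfl⟩ := mem_image.mp hk
    have hxA := (hP.1.1 b hb).1 hx
    have hyA := (hP.1.1 b hb).1 hy
    have hxy : x ≠ y := fun h => hik (by rw [h])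
    have hc := hP.2.2 b hb x hx y hy hxy
    exact fun h => hc ((hcd x hxA y hyA).mpr h)

lemma Mset_card_eq {A B : Finset ℕ} {c d f g : ℕ → ℕ}
    (hfB : ∀ x ∈ A, f x ∈ B) (hgA : ∀ y ∈ B, g y ∈ A)
    (hgf : ∀ x ∈ A, g (f x) = x) (hfg : ∀ y ∈ B, f (g y) = y)
    (hcd : ∀ x ∈ A, ∀ y ∈ A, c x = c y ↔ d (f x) = d (f y)) :
    (Mset A c).card = (Mset B d).card := by
  have hdc : ∀ x ∈ B, ∀ y ∈ B, d x = d y ↔ c (g x) = c (g y) := by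
    intro x hx y hy
    rw [hcd (g x) (hgA x hx) (g y) (hgA y hy), hfg x hx, hfg y hy]
  refine Finset.card_bij' (fun P _ => P.image (fun b => b.image f))
    (fun Q _ => Q.image (fun b => b.image g)) ?hi ?hj ?li ?ri
  case hi =>
    intro P hP
    exact mem_Mset.mpr (Pred_map hfB hgA hgf hfg hcd (mem_Mset.mp hP))
  case hj =>
    intro Q hQ
    exact mem_Mset.mpr (Pred_map hgA hfB hfg hgf hdc (mem_Mset.mp hQ))
  case li =>
    intro P hP
    show (P.image (fun b => b.image f)).image (fun b => b.image g) = P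
    rw [Finset.image_image]
    have hPred := mem_Mset.mp hP
    have : P.image ((fun b : Finset ℕ => b.image g) ∘ (fun b : Finset ℕ => b.image f))
        = P.image id := by
      apply Finset.image_congr
      intro b hb
      exact image_roundtrip hgf (hPred.1.1 b hb).1
    rw [this, Finset.image_id]
  case ri =>
    intro Q hQ
    show (Q.image (fun b => b.image g)).image (fun b => b.image f) = Q
    rw [Finset.image_image]
    have hPred := mem_Mset.mp hQ
    have : Q.image ((fun b : Finset ℕ => b.image f) ∘ (fun b : Finset ℕ => b.image g))
        = Q.image id := by
      apply Finset.image_congr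
      intro b hb
      exact image_roundtrip hfg (hPred.1.1 b hb).1
    rw [this, Finset.image_id]

end relabel

section shift
variable {m : ℕ} {n : Fin m → ℕ} {t : Fin m} {p : ℕ}

def fup (p x : ℕ) : ℕ := if x < p then x else x + 1
def gdn (p y : ℕ) : ℕ := if y < p then y else y - 1

lemma gdn_fup (p x : ℕ) : gdn p (fup p x) = x := by
  unfold fup gdn; split_ifs <;> omega

lemma fup_gdn {p y : ℕ} (hy : y ≠ p) : fup p (gdn p y) = y := by
  unfold fup gdn; split_ifs <;> omega

lemma nt_pos (hp : inBox n t p) : 1 ≤ n t := by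
  obtain ⟨h1, h2⟩ := hp; omega

lemma total_pred (hp : inBox n t p) :
    total n = total (Function.update n t (n t - 1)) + 1 := by
  have h1 : ∑ x ∈ univ.erase t, n x + n t = ∑ x, n x :=
    Finset.sum_erase_add _ _ (mem_univ t)
  have h2 : ∑ x : Fin m, Function.update n t (n t - 1) x
      = (n t - 1) + ∑ x ∈ univ.erase t, n x := by
    rw [Finset.sum_update_of_mem (mem_univ t), Finset.sdiff_singleton_eq_erase]
  have h3 := nt_pos hp
  unfold total
  omega

lemma psum_update_of_not_lt {s : Fin m} (v : ℕ) (h : ¬ t < s) :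
    psum (Function.update n t v) s = psum n s := by
  unfold psum
  refine Finset.sum_congr rfl (fun x _ => ?_)
  by_cases hx : x < s
  · rw [if_pos hx, if_pos hx, Function.update_of_ne (fun he => h (lt_of_eq_of_lt he.symm hx))]
  · rw [if_neg hx, if_neg hx]

lemma psum_update_of_lt {s : Fin m} (v : ℕ) (h : t < s) :
    psum (Function.update n t v) s + n t = psum n s + v := by
  rw [psum_eq, psum_eq]
  have ht : t ∈ univ.filter (· < s) := mem_filter.mpr ⟨mem_univ t, h⟩
  rw [Finset.sum_update_of_mem ht, Finset.sdiff_singleton_eq_erase]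
  have h1 : ∑ x ∈ (univ.filter (· < s)).erase t, n x + n t
      = ∑ x ∈ univ.filter (· < s), n x := Finset.sum_erase_add _ _ ht
  omega

lemma shift_box (hp : inBox n t p) {s : Fin m} {x : ℕ}
    (hx : inBox (Function.update n t (n t - 1)) s x) :
    inBox n s (fup p x) := by
  have hnt := nt_pos hp
  obtain ⟨hp1, hp2⟩ := hp
  obtain ⟨hx1, hx2⟩ := hx
  unfold fup
  rcases lt_trichotomy s t with hst | hst | hst
  · -- s < t : x stays
    have hv : Function.update n t (n t - 1) s = n s :=
      Function.update_of_ne (ne_of_lt hst) _ _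
    have hpe : psum (Function.update n t (n t - 1)) s = psum n s :=
      psum_update_of_not_lt _ (not_lt_of_gt hst)
    rw [hpe] at hx1
    rw [hv, hpe] at hx2
    have hgap : psum n s + n s ≤ psum n t := psum_add_le n hst
    rw [if_pos (by omega)]
    exact ⟨hx1, hx2⟩
  · -- s = t
    subst hst
    have hv : Function.update n s (n s - 1) s = n s - 1 := Function.update_self _ _ _
    have hpe : psum (Function.update n s (n s - 1)) s = psum n s :=
      psum_update_of_not_lt _ (lt_irrefl s)
    rw [hpe] at hx1
    rw [hv, hpe] at hx2
    by_cases hxp : x < p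
    · rw [if_pos hxp]; exact ⟨hx1, by omega⟩
    · rw [if_neg hxp]; exact ⟨by omega, by omega⟩
  · -- t < s : x shifts up
    have hv : Function.update n t (n t - 1) s = n s :=
      Function.update_of_ne (ne_of_gt hst) _ _
    have hpe : psum (Function.update n t (n t - 1)) s + n t = psum n s + (n t - 1) :=
      psum_update_of_lt _ hst
    have hgap : psum (Function.update n t (n t - 1)) t
          + Function.update n t (n t - 1) t
        ≤ psum (Function.update n t (n t - 1)) s :=
      psum_add_le _ hst
    have hpt : psum (Function.update n t (n t - 1)) t = psum n t :=
      psum_update_of_not_lt _ (lt_irrefl t)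
    have hvt : Function.update n t (n t - 1) t = n t - 1 := Function.update_self _ _ _
    rw [hv] at hx2
    rw [hpt, hvt] at hgap
    rw [if_neg (by omega)]
    constructor <;> omega

lemma shift_color (hp : inBox n t p) {x : ℕ}
    (hx : x < total (Function.update n t (n t - 1))) :
    colorOf n (fup p x) = colorOf (Function.update n t (n t - 1)) x := by
  obtain ⟨s, hs⟩ := exists_box _ hx
  rw [colorOf_eq _ (shift_box hp hs), colorOf_eq _ hs]

lemma fup_mem (hp : inBox n t p) {x : ℕ}
    (hx : x < total (Function.update n t (n t - 1))) :
    fup p x < total n ∧ fup p x ≠ p := by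
  obtain ⟨s, hs⟩ := exists_box _ hx
  have hbox := shift_box hp hs
  have h1 : fup p x < total n := lt_of_lt_of_le hbox.2 (psum_add_le_total n s)
  refine ⟨h1, ?_⟩
  unfold fup
  split_ifs with h <;> omega

lemma gdn_mem (hp : inBox n t p) {y : ℕ} (hy : y < total n) (hyp : y ≠ p) :
    gdn p y < total (Function.update n t (n t - 1)) := by
  have htp := total_pred hp
  have hpN : p < total n := lt_of_lt_of_le hp.2 (psum_add_le_total n t)
  unfold gdn
  split_ifs with h <;> omega

lemma box_of_gdn (hp : inBox n t p) {q : ℕ} (hqp : q ≠ p) {u : Fin m}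
    (hq : inBox n u q) : inBox (Function.update n t (n t - 1)) u (gdn p q) := by
  have hqN : q < total n := lt_of_lt_of_le hq.2 (psum_add_le_total n u)
  have hg := gdn_mem hp hqN hqp
  obtain ⟨s, hs⟩ := exists_box _ hg
  have hbox := shift_box hp hs
  rw [fup_gdn hqp] at hbox
  rw [box_unique n hbox hq] at hs
  exact hs

/-- Step A: removing a point of box `t` from the full range. -/
lemma card_Mset_erase (hp : inBox n t p) :
    (Mset ((range (total n)).erase p) (colorOf n)).card
      = (Mset (range (total (Function.update n t (n t - 1))))
          (colorOf (Function.update n t (n t - 1)))).card := by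
  symm
  refine Mset_card_eq (f := fup p) (g := gdn p) ?_ ?_ ?_ ?_ ?_
  · intro x hx
    rw [mem_range] at hx
    obtain ⟨h1, h2⟩ := fup_mem hp hx
    exact mem_erase.mpr ⟨h2, mem_range.mpr h1⟩
  · intro y hy
    obtain ⟨hyp, hyN⟩ := mem_erase.mp hy
    exact mem_range.mpr (gdn_mem hp (mem_range.mp hyN) hyp)
  · intro x _; exact gdn_fup p x
  · intro y hy; exact fup_gdn (mem_erase.mp hy).1
  · intro x hx y hy
    rw [mem_range] at hx hy
    rw [shift_color hp hx, shift_color hp hy]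

/-- Step B: removing a point of box `t` from the range minus another point. -/
lemma card_Mset_erase2 (hp : inBox n t p) {q : ℕ} (hq : q < total n) (hqp : q ≠ p) :
    (Mset (((range (total n)).erase p).erase q) (colorOf n)).card
      = (Mset ((range (total (Function.update n t (n t - 1)))).erase (gdn p q))
          (colorOf (Function.update n t (n t - 1)))).card := by
  symm
  refine Mset_card_eq (f := fup p) (g := gdn p) ?_ ?_ ?_ ?_ ?_
  · intro x hx
    obtain ⟨hxg, hxN⟩ := mem_erase.mp hx
    rw [mem_range] at hxN
    obtain ⟨h1, h2⟩ := fup_mem hp hxN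
    refine mem_erase.mpr ⟨?_, mem_erase.mpr ⟨h2, mem_range.mpr h1⟩⟩
    intro he
    exact hxg (by rw [← gdn_fup p x, he])
  · intro y hy
    obtain ⟨hyq, hy2⟩ := mem_erase.mp hy
    obtain ⟨hyp, hyN⟩ := mem_erase.mp hy2
    refine mem_erase.mpr ⟨?_, mem_range.mpr (gdn_mem hp (mem_range.mp hyN) hyp)⟩
    intro he
    exact hyq (by rw [← fup_gdn hyp, he, fup_gdn hqp])
  · intro x _; exact gdn_fup p x
  · intro y hy; exact fup_gdn (mem_erase.mp (mem_erase.mp hy).2).1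
  · intro x hx y hy
    have hxN := mem_range.mp (mem_erase.mp hx).2
    have hyN := mem_range.mp (mem_erase.mp hy).2
    rw [shift_color hp hxN, shift_color hp hyN]

end shift

section bridge
variable {m : ℕ}

lemma matchings_eq (n : Fin m → ℕ) :
    matchings n = Mset (range (total n)) (colorOf n) := by
  unfold matchings Mset
  apply Finset.filter_congr
  intro P hP
  rw [mem_powerset] at hP
  have hblocks : ∀ b ∈ P, b ⊆ range (total n) := fun b hb => mem_powerset.mp (hP hb)
  unfold IsPartitionOf InhomBlocks Pred
  constructor
  · rintro ⟨h1, h2, h3⟩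
    refine ⟨h1, h2, fun b hb i hi k hk hik hc => h3 b hb i hi k hk hik ?_⟩
    have hiN := mem_range.mp (hblocks b hb hi)
    have hkN := mem_range.mp (hblocks b hb hk)
    exact (sameBox_iff n hiN hkN).mpr hc
  · rintro ⟨h1, h2, h3⟩
    refine ⟨h1, h2, fun b hb i hi k hk hik hc => h3 b hb i hi k hk hik ?_⟩
    have hiN := mem_range.mp (hblocks b hb hi)
    have hkN := mem_range.mp (hblocks b hb hk)
    exact (sameBox_iff n hiN hkN).mp hc

lemma K_eq (n : Fin m → ℕ) :
    K n = (Mset (range (total n)) (colorOf n)).card := by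
  rw [K, matchings_eq]

end bridge

section recurrence
variable {m : ℕ}

noncomputable def boxFin (n : Fin m → ℕ) (j : Fin m) (i : ℕ) : Fin m :=
  if h : ∃ s, inBox n s i then h.choose else j

lemma boxFin_spec {n : Fin m → ℕ} {i : ℕ} (hi : i < total n) (j : Fin m) :
    inBox n (boxFin n j i) i := by
  unfold boxFin
  have h := exists_box n hi
  rw [dif_pos h]
  exact h.choose_spec

lemma Krec (n : Fin m → ℕ) (j : Fin m) :
    K (Function.update n j (n j + 1))
      = ∑ u ∈ univ.erase j, n u * K (Function.update n u (n u - 1)) := by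
  set n' := Function.update n j (n j + 1) with hn'
  have hn'j : n' j = n j + 1 := Function.update_self _ _ _
  have hn'x : ∀ x, x ≠ j → n' x = n x := fun x hx => Function.update_of_ne hx _ _
  have hnn' : Function.update n' j (n' j - 1) = n := by
    funext x
    by_cases hx : x = j
    · subst hx
      rw [Function.update_self, hn'j]
      omega
    · rw [Function.update_of_ne hx, hn'x x hx]
  set a := psum n j + n j with ha
  have hpsj : psum n' j = psum n j := psum_update_of_not_lt _ (lt_irrefl j)
  have hpa : inBox n' j a := by
    refine ⟨?_, ?_⟩
    · rw [hpsj]; omega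
    · rw [hpsj, hn'j]; omega
  have haN : a < total n' := lt_of_lt_of_le hpa.2 (psum_add_le_total n' j)
  have hca : colorOf n' a = (j : ℕ) := colorOf_eq n' hpa
  rw [K_eq, deletion (mem_range.mpr haN)]
  have hmaps : ∀ x ∈ (range (total n')).filter
      (fun x => x ≠ a ∧ colorOf n' x ≠ colorOf n' a),
      boxFin n' j x ∈ univ.erase j := by
    intro x hx
    rw [mem_filter, mem_range] at hx
    obtain ⟨hxN, hxa, hcx⟩ := hx
    refine mem_erase.mpr ⟨?_, mem_univ _⟩
    intro he
    apply hcx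
    rw [hca, ← he]
    exact colorOf_eq n' (boxFin_spec hxN j)
  rw [← Finset.sum_fiberwise_of_maps_to hmaps]
  refine Finset.sum_congr rfl (fun u hu => ?_)
  have huj : u ≠ j := (mem_erase.mp hu).1
  have hvne : (u : ℕ) ≠ (j : ℕ) := fun h => huj (Fin.ext h)
  -- identify the fiber with the points of box u
  have hfiber : ((range (total n')).filter
        (fun x => x ≠ a ∧ colorOf n' x ≠ colorOf n' a)).filter
        (fun x => boxFin n' j x = u)
      = Finset.Ico (psum n' u) (psum n' u + n' u) := by
    ext x
    rw [mem_filter, mem_filter, mem_range, Finset.mem_Ico]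
    constructor
    · rintro ⟨⟨hxN, _, _⟩, hbox⟩
      have := boxFin_spec hxN j
      rw [hbox] at this
      exact ⟨this.1, this.2⟩
    · intro hx
      have hxbox : inBox n' u x := ⟨hx.1, hx.2⟩
      have hxN : x < total n' := lt_of_lt_of_le hxbox.2 (psum_add_le_total n' u)
      have hcx : colorOf n' x = (u : ℕ) := colorOf_eq n' hxbox
      refine ⟨⟨hxN, ?_, ?_⟩, ?_⟩
      · intro he
        subst he
        rw [hca] at hcx
        exact hvne hcx.symm
      · rw [hca, hcx]
        exact hvne
      · exact box_unique n' (boxFin_spec hxN j) hxbox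
  rw [hfiber]
  -- each term of the fiber equals K (update n u (n u - 1))
  have hterm : ∀ x ∈ Finset.Ico (psum n' u) (psum n' u + n' u),
      (Mset (((range (total n')).erase a).erase x) (colorOf n')).card
        = K (Function.update n u (n u - 1)) := by
    intro x hx
    rw [Finset.mem_Ico] at hx
    have hxbox : inBox n' u x := ⟨hx.1, hx.2⟩
    have hxN : x < total n' := lt_of_lt_of_le hxbox.2 (psum_add_le_total n' u)
    have hxa : x ≠ a := by
      intro he
      subst he
      exact hvne (((colorOf_eq n' hxbox).symm.trans hca))
    rw [card_Mset_erase2 hpa hxN hxa, hnn']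
    have hbox2 : inBox n u (gdn a x) := by
      have h := box_of_gdn hpa hxa hxbox
      rwa [hnn'] at h
    rw [card_Mset_erase hbox2, ← K_eq]
  rw [Finset.sum_congr rfl hterm, Finset.sum_const, Nat.card_Ico]
  have hcard : psum n' u + n' u - psum n' u = n u := by
    rw [hn'x u huj]; omega
  rw [hcard, smul_eq_mul]

end recurrence

/-- the difference system satisfied by the numbers of inhomogeneous
perfect matchings.  (A term `n_j * K_j^-(n)` is automatically `0` when `n_j = 0`.) -/
theorem matching_difference_system {m : ℕ} (n : Fin m → ℕ) (j k : Fin m) (hjk : j ≠ k) :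
    (K (Function.update n j (n j + 1)) : ℤ) - (K (Function.update n k (n k + 1)) : ℤ)
      = (n k : ℤ) * (K (Function.update n k (n k - 1)) : ℤ)
        - (n j : ℤ) * (K (Function.update n j (n j - 1)) : ℤ) := by
  have hjZ : (K (Function.update n j (n j + 1)) : ℤ)
      = ∑ u ∈ univ.erase j, (n u : ℤ) * (K (Function.update n u (n u - 1)) : ℤ) := by
    rw [Krec n j]
    push_cast
    rfl
  have hkZ : (K (Function.update n k (n k + 1)) : ℤ)
      = ∑ u ∈ univ.erase k, (n u : ℤ) * (K (Function.update n u (n u - 1)) : ℤ) := by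
    rw [Krec n k]
    push_cast
    rfl
  rw [hjZ, hkZ, Finset.sum_erase_eq_sub (mem_univ j), Finset.sum_erase_eq_sub (mem_univ k)]
  ring


end Paper
end
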